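/- arXiv:2602.15405 — 4 statements merged into one kernel-verified Lean document; each statement's English description precedes it below -/
import Mathlib

section
/- Let (Ω, 𝒜, μ) be a probability space, S_X, S_Y, S_C countable types, T ≥ 1 a natural number, and random variables X₀, …, X_T : Ω → S_X, Y₀, …, Y_T : Ω → S_Y, C : Ω → S_C. Assume the pair process (X_t, Y_t) is a Markov chain conditionally on C: for every t < T, every c ∈ S_C, and all values with μ(⋂_{k=0}^{t} {X_k = x_k, Y_k = y_k} ∩ {C = c}) > 0, one has μ[{X_{t+1} = x_{t+1}, Y_{t+1} = y_{t+1}} | ⋂_{k=0}^{t} {X_k = x_k, Y_k = y_k} ∩ {C = c}] = μ[{X_{t+1} = x_{t+1}, Y_{t+1} = y_{t+1}} | {X_t = x_t} ∩ {Y_t = y_t} ∩ {C = c}]. Then for all trajectories with μ(⋂_{t=0}^{T} {X_t = x_t, Y_t = y_t} ∩ {C = c}) > 0: μ[⋂_{t=0}^{T−1} {X_t = x_t, Y_t = y_t} | {X_T = x_T} ∩ {Y_T = y_T} ∩ {C = c}] = ∏_{t=1}^{T} μ[{X_{t−1} = x_{t−1}} | {X_t = x_t} ∩ {Y_t = y_t}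 ∩ {C = c}] · μ[{Y_{t−1} = y_{t−1}} | {X_{t−1} = x_{t−1}} ∩ {X_t = x_t} ∩ {Y_t = y_t} ∩ {C = c}]. -/
/-!
Writing `Aₜ` for the event `{Xₜ = xₜ, Yₜ = yₜ}` and `E` for `{C = c}`, the Markov property turns
the forward chain rule into `μ (A₀ ∩ ⋯ ∩ Aₙ ∩ E) = μ (Aₙ ∩ E) · ∏_{t ≤ n} μ[Aₜ₋₁ | Aₜ ∩ E]`,
by induction on `n`: each step trades `μ[Aₙ₊₁ | Aₙ ∩ E] · μ (Aₙ ∩ E)` for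
`μ[Aₙ | Aₙ₊₁ ∩ E] · μ (Aₙ₊₁ ∩ E)`, both being `μ (Aₙ ∩ Aₙ₊₁ ∩ E)`. Dividing by `μ (A_T ∩ E)`
gives the reverse-time factorization of the pair chain, and the chain rule for conditional
probabilities splits each reverse pair step into a signal step followed by a logit step.
-/

open MeasureTheory ProbabilityTheory

namespace ProbabilityTheory

variable {Ω : Type*}

theorem antitone_biInter_range_inter (A : ℕ → Set Ω) (E : Set Ω) :
    Antitone fun n => (⋂ k ∈ Finset.range (n + 1), A k) ∩ E := fun _ _ hmn =>
  Set.inter_subset_inter_left E <| Set.biInter_subset_biInter_left <| by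
    simpa using Finset.range_subset_range.mpr (Nat.succ_le_succ hmn)

variable [MeasurableSpace Ω] {μ : Measure Ω}

theorem cond_inter_eq_cond_mul_cond [IsFiniteMeasure μ] {s a : Set Ω} (hs : MeasurableSet s)
    (ha : MeasurableSet a) (b : Set Ω) :
    μ[a ∩ b | s] = μ[a | s] * μ[b | a ∩ s] := by
  rw [← cond_mul_eq_inter ha b, cond_cond_eq_cond_inter hs ha, Set.inter_comm s a, mul_comm]

section MarkovEvents

variable [IsFiniteMeasure μ] {A : ℕ → Set Ω} {E : Set Ω} {T : ℕ}

theorem measure_biInter_range_inter_eq_mul_prod_cond_of_markov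
    (hA : ∀ t, MeasurableSet (A t)) (hE : MeasurableSet E)
    (hMarkov : ∀ t < T, 0 < μ ((⋂ k ∈ Finset.range (t + 1), A k) ∩ E) →
      μ[A (t + 1) | (⋂ k ∈ Finset.range (t + 1), A k) ∩ E] = μ[A (t + 1) | A t ∩ E])
    (hpos : 0 < μ ((⋂ k ∈ Finset.range (T + 1), A k) ∩ E)) :
    ∀ n ≤ T, μ ((⋂ k ∈ Finset.range (n + 1), A k) ∩ E)
      = μ (A n ∩ E) * ∏ t ∈ Finset.Icc 1 n, μ[A (t - 1) | A t ∩ E] := by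
  intro n
  induction n with
  | zero => simp
  | succ n ih =>
    intro hn
    have hBm : MeasurableSet ((⋂ k ∈ Finset.range (n + 1), A k) ∩ E) :=
      (Finset.measurableSet_biInter _ fun k _ => hA k).inter hE
    have hBpos := hpos.trans_le <|
      measure_mono (antitone_biInter_range_inter A E (Nat.le_of_succ_le hn))
    have hswap : A n ∩ E ∩ A (n + 1) = A (n + 1) ∩ E ∩ A n := by
      rw [Set.inter_right_comm, Set.inter_comm (A n), Set.inter_right_comm]
    calc μ ((⋂ k ∈ Finset.range (n + 2), A k) ∩ E)
        = μ[A (n + 1) | A n ∩ E] * μ ((⋂ k ∈ Finset.range (n + 1), A k) ∩ E) := by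
          rw [Finset.range_add_one, Finset.set_biInter_insert, Set.inter_comm (A _),
            Set.inter_right_comm, ← cond_mul_eq_inter hBm, hMarkov n hn hBpos]
      _ = μ[A n | A (n + 1) ∩ E] * μ (A (n + 1) ∩ E)
            * ∏ t ∈ Finset.Icc 1 n, μ[A (t - 1) | A t ∩ E] := by
          rw [ih (Nat.le_of_succ_le hn), ← mul_assoc, cond_mul_eq_inter ((hA n).inter hE), hswap,
            ← cond_mul_eq_inter ((hA (n + 1)).inter hE)]
      _ = μ (A (n + 1) ∩ E) * ∏ t ∈ Finset.Icc 1 (n + 1), μ[A (t - 1) | A t ∩ E] := by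
          rw [Finset.prod_Icc_succ_top (by omega), Nat.add_sub_cancel]
          ring

theorem cond_biInter_range_eq_prod_cond_of_markov
    (hA : ∀ t, MeasurableSet (A t)) (hE : MeasurableSet E)
    (hMarkov : ∀ t < T, 0 < μ ((⋂ k ∈ Finset.range (t + 1), A k) ∩ E) →
      μ[A (t + 1) | (⋂ k ∈ Finset.range (t + 1), A k) ∩ E] = μ[A (t + 1) | A t ∩ E])
    (hpos : 0 < μ ((⋂ k ∈ Finset.range (T + 1), A k) ∩ E)) :
    μ[⋂ t ∈ Finset.range T, A t | A T ∩ E] = ∏ t ∈ Finset.Icc 1 T, μ[A (t - 1) | A t ∩ E] := by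
  have hset : A T ∩ E ∩ ⋂ t ∈ Finset.range T, A t = (⋂ k ∈ Finset.range (T + 1), A k) ∩ E := by
    rw [Finset.range_add_one, Finset.set_biInter_insert, Set.inter_right_comm]
  have hATpos : μ (A T ∩ E) ≠ 0 :=
    (hpos.trans_le (hset ▸ measure_mono Set.inter_subset_left)).ne'
  rw [cond_apply ((hA T).inter hE), hset,
    measure_biInter_range_inter_eq_mul_prod_cond_of_markov hA hE hMarkov hpos T le_rfl,
    ENNReal.inv_mul_cancel_left hATpos (measure_ne_top _ _)]

end MarkovEvents

end ProbabilityTheory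

theorem parallel_joint_reverse_factorization_general
    {Ω : Type*} [MeasurableSpace Ω] (μ : Measure Ω) [IsProbabilityMeasure μ]
    {S_X S_Y S_C : Type*}
    [MeasurableSpace S_X] [MeasurableSingletonClass S_X]
    [MeasurableSpace S_Y] [MeasurableSingletonClass S_Y]
    [MeasurableSpace S_C] [MeasurableSingletonClass S_C]
    (T : ℕ)
    (X : ℕ → Ω → S_X) (Y : ℕ → Ω → S_Y) (C : Ω → S_C)
    (hX : ∀ k, Measurable (X k)) (hY : ∀ k, Measurable (Y k)) (hC : Measurable C)
    (hMarkov : ∀ t, t < T → ∀ (x : ℕ → S_X) (y : ℕ → S_Y) (c : S_C),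
      0 < μ ((⋂ k ∈ Finset.range (t + 1), ({ω | X k ω = x k} ∩ {ω | Y k ω = y k}))
              ∩ {ω | C ω = c}) →
      μ[|(⋂ k ∈ Finset.range (t + 1), ({ω | X k ω = x k} ∩ {ω | Y k ω = y k}))
          ∩ {ω | C ω = c}]
          ({ω | X (t + 1) ω = x (t + 1)} ∩ {ω | Y (t + 1) ω = y (t + 1)})
        = μ[|{ω | X t ω = x t} ∩ {ω | Y t ω = y t} ∩ {ω | C ω = c}]
            ({ω | X (t + 1) ω = x (t + 1)} ∩ {ω | Y (t + 1) ω = y (t + 1)})) :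
    ∀ (x : ℕ → S_X) (y : ℕ → S_Y) (c : S_C),
      0 < μ ((⋂ t ∈ Finset.range (T + 1), ({ω | X t ω = x t} ∩ {ω | Y t ω = y t}))
              ∩ {ω | C ω = c}) →
      μ[|{ω | X T ω = x T} ∩ {ω | Y T ω = y T} ∩ {ω | C ω = c}]
          (⋂ t ∈ Finset.range T, ({ω | X t ω = x t} ∩ {ω | Y t ω = y t}))
        = ∏ t ∈ Finset.Icc 1 T,
            (μ[|{ω | X t ω = x t} ∩ {ω | Y t ω = y t} ∩ {ω | C ω = c}]
                {ω | X (t - 1) ω = x (t - 1)}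
             * μ[|{ω | X (t - 1) ω = x (t - 1)} ∩ {ω | X t ω = x t}
                  ∩ {ω | Y t ω = y t} ∩ {ω | C ω = c}]
                {ω | Y (t - 1) ω = y (t - 1)}) := by
  intro x y c hpos
  have hXm : ∀ t, MeasurableSet {ω | X t ω = x t} := fun t => hX t (measurableSet_singleton _)
  have hA : ∀ t, MeasurableSet ({ω | X t ω = x t} ∩ {ω | Y t ω = y t}) := fun t =>
    (hXm t).inter (hY t (measurableSet_singleton _))
  have hE : MeasurableSet {ω | C ω = c} := hC (measurableSet_singleton _)
  refine (cond_biInter_range_eq_prod_cond_of_markov hA hE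
    (fun t ht => hMarkov t ht x y c) hpos).trans (Finset.prod_congr rfl fun t _ => ?_)
  rw [cond_inter_eq_cond_mul_cond ((hA t).inter hE) (hXm (t - 1))]
  simp only [Set.inter_assoc]

/-- Parallel strategy's joint reverse-time factorization: if the pair process `(X t, Y t)`
is a Markov chain conditionally on `C`, then the joint reverse trajectory, conditioned on
`C = c`, factorizes into per-timestep signal updates followed by logit updates conditioned
on the freshly updated signal. -/
theorem parallel_joint_reverse_factorization
    {Ω : Type*} [MeasurableSpace Ω] (μ : Measure Ω) [IsProbabilityMeasure μ]
    {S_X S_Y S_C : Type*}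
    [Countable S_X] [MeasurableSpace S_X] [MeasurableSingletonClass S_X]
    [Countable S_Y] [MeasurableSpace S_Y] [MeasurableSingletonClass S_Y]
    [Countable S_C] [MeasurableSpace S_C] [MeasurableSingletonClass S_C]
    (T : ℕ) (hT : 1 ≤ T)
    (X : ℕ → Ω → S_X) (Y : ℕ → Ω → S_Y) (C : Ω → S_C)
    (hX : ∀ k, Measurable (X k)) (hY : ∀ k, Measurable (Y k)) (hC : Measurable C)
    (hMarkov : ∀ t, t < T → ∀ (x : ℕ → S_X) (y : ℕ → S_Y) (c : S_C),
      0 < μ ((⋂ k ∈ Finset.range (t + 1), ({ω | X k ω = x k} ∩ {ω | Y k ω = y k}))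
              ∩ {ω | C ω = c}) →
      μ[|(⋂ k ∈ Finset.range (t + 1), ({ω | X k ω = x k} ∩ {ω | Y k ω = y k}))
          ∩ {ω | C ω = c}]
          ({ω | X (t + 1) ω = x (t + 1)} ∩ {ω | Y (t + 1) ω = y (t + 1)})
        = μ[|{ω | X t ω = x t} ∩ {ω | Y t ω = y t} ∩ {ω | C ω = c}]
            ({ω | X (t + 1) ω = x (t + 1)} ∩ {ω | Y (t + 1) ω = y (t + 1)})) :
    ∀ (x : ℕ → S_X) (y : ℕ → S_Y) (c : S_C),
      0 < μ ((⋂ t ∈ Finset.range (T + 1), ({ω | X t ω = x t} ∩ {ω | Y t ω = y t}))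
              ∩ {ω | C ω = c}) →
      μ[|{ω | X T ω = x T} ∩ {ω | Y T ω = y T} ∩ {ω | C ω = c}]
          (⋂ t ∈ Finset.range T, ({ω | X t ω = x t} ∩ {ω | Y t ω = y t}))
        = ∏ t ∈ Finset.Icc 1 T,
            (μ[|{ω | X t ω = x t} ∩ {ω | Y t ω = y t} ∩ {ω | C ω = c}]
                {ω | X (t - 1) ω = x (t - 1)}
             * μ[|{ω | X (t - 1) ω = x (t - 1)} ∩ {ω | X t ω = x t}
                  ∩ {ω | Y t ω = y t} ∩ {ω | C ω = c}]
                {ω | Y (t - 1) ω = y (t - 1)}) :=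
  parallel_joint_reverse_factorization_general μ T X Y C hX hY hC hMarkov
end

section
/- Let (Ω, 𝒜, μ) be a probability space, S_X, S_Y, S_C countable types, T ≥ 1 a natural number, and random variables X₀, …, X_T : Ω → S_X, Y₀, …, Y_T : Ω → S_Y, C : Ω → S_C. Fix values x₀, …, x_T ∈ S_X, y₀, …, y_T ∈ S_Y, c ∈ S_C with μ(⋂_{t=0}^{T} {X_t = x_t} ∩ ⋂_{t=0}^{T} {Y_t = y_t} ∩ {C = c}) > 0, and write E_X = ⋂_{t=0}^{T−1} {X_t = x_t} and E_Y = ⋂_{t=0}^{T−1} {Y_t = y_t}. Assume: (i) conditional independence of the X-trajectory from the terminal logit noise: μ[E_X | {X_T = x_T} ∩ {Y_T = y_T} ∩ {C = c}] = μ[E_X | {X_T = x_T} ∩ {C = c}]; (ii) conditional independence of the Y-trajectory from intermediate signal states: μ[E_Y | ⋂_{t=0}^{T} {X_t = x_t} ∩ {Y_T = y_T} ∩ {C = c}] = μ[E_Y | {X_0 = x_0} ∩ {Y_T = y_T} ∩ {C = c}]; (iii) the X-reverse factorization μ[E_X | {X_T = x_T} ∩ {C = c}] = ∏_{t=1}^{T}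 μ[{X_{t−1} = x_{t−1}} | {X_t = x_t} ∩ {C = c}]; and (iv) the Y-reverse factorization μ[E_Y | {Y_T = y_T} ∩ {X_0 = x_0} ∩ {C = c}] = ∏_{t=1}^{T} μ[{Y_{t−1} = y_{t−1}} | {Y_t = y_t} ∩ {X_0 = x_0} ∩ {C = c}]. Then μ[E_X ∩ E_Y | {X_T = x_T} ∩ {Y_T = y_T} ∩ {C = c}] = ∏_{t=1}^{T} μ[{X_{t−1} = x_{t−1}} | {X_t = x_t} ∩ {C = c}] · ∏_{t=1}^{T} μ[{Y_{t−1} = y_{t−1}} | {Y_t = y_t} ∩ {X_0 = x_0} ∩ {C = c}]. -/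
open MeasureTheory ProbabilityTheory

/-- Alternating strategy's joint factorization: under conditional independence of the
signal trajectory from the terminal logit noise and of the logit trajectory from the
intermediate signal states, the joint reverse-time distribution, conditioned on the
corrupted observation `C`, splits into a full product of signal reverse transitions
followed by a full product of logit reverse transitions conditioned on `X 0`. -/
theorem alternating_joint_factorization
    {Ω : Type*} [MeasurableSpace Ω] (μ : Measure Ω) [IsProbabilityMeasure μ]
    {S_X S_Y S_C : Type*}
    [Countable S_X] [MeasurableSpace S_X] [MeasurableSingletonClass S_X]
    [Countable S_Y] [MeasurableSpace S_Y] [MeasurableSingletonClass S_Y]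
    [Countable S_C] [MeasurableSpace S_C] [MeasurableSingletonClass S_C]
    (T : ℕ) (hT : 1 ≤ T)
    (X : ℕ → Ω → S_X) (Y : ℕ → Ω → S_Y) (C : Ω → S_C)
    (hX : ∀ k, Measurable (X k)) (hY : ∀ k, Measurable (Y k)) (hC : Measurable C)
    (x : ℕ → S_X) (y : ℕ → S_Y) (c : S_C)
    (EX EY : Set Ω)
    (hEX : EX = ⋂ t ∈ Finset.range T, {ω | X t ω = x t})
    (hEY : EY = ⋂ t ∈ Finset.range T, {ω | Y t ω = y t})
    (hpos : 0 < μ ((⋂ t ∈ Finset.range (T + 1), {ω | X t ω = x t})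
                    ∩ (⋂ t ∈ Finset.range (T + 1), {ω | Y t ω = y t})
                    ∩ {ω | C ω = c}))
    -- (i) conditional independence of the X-trajectory from the terminal logit noise
    (hi : μ[|{ω | X T ω = x T} ∩ {ω | Y T ω = y T} ∩ {ω | C ω = c}] EX
        = μ[|{ω | X T ω = x T} ∩ {ω | C ω = c}] EX)
    -- (ii) conditional independence of the Y-trajectory from intermediate signal states
    (hii : μ[|(⋂ t ∈ Finset.range (T + 1), {ω | X t ω = x t})
              ∩ {ω | Y T ω = y T} ∩ {ω | C ω = c}] EY
         = μ[|{ω | X 0 ω = x 0} ∩ {ω | Y T ω = y T} ∩ {ω | C ω = c}] EY)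
    -- (iii) the X-reverse factorization
    (hiii : μ[|{ω | X T ω = x T} ∩ {ω | C ω = c}] EX
          = ∏ t ∈ Finset.Icc 1 T,
              μ[|{ω | X t ω = x t} ∩ {ω | C ω = c}] {ω | X (t - 1) ω = x (t - 1)})
    -- (iv) the Y-reverse factorization
    (hiv : μ[|{ω | Y T ω = y T} ∩ {ω | X 0 ω = x 0} ∩ {ω | C ω = c}] EY
         = ∏ t ∈ Finset.Icc 1 T,
             μ[|{ω | Y t ω = y t} ∩ {ω | X 0 ω = x 0} ∩ {ω | C ω = c}]
               {ω | Y (t - 1) ω = y (t - 1)}) :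
    μ[|{ω | X T ω = x T} ∩ {ω | Y T ω = y T} ∩ {ω | C ω = c}] (EX ∩ EY)
      = (∏ t ∈ Finset.Icc 1 T,
          μ[|{ω | X t ω = x t} ∩ {ω | C ω = c}] {ω | X (t - 1) ω = x (t - 1)})
        * ∏ t ∈ Finset.Icc 1 T,
            μ[|{ω | Y t ω = y t} ∩ {ω | X 0 ω = x 0} ∩ {ω | C ω = c}]
              {ω | Y (t - 1) ω = y (t - 1)} := by
  classical
  have mXT : MeasurableSet {ω | X T ω = x T} := hX T (measurableSet_singleton _)
  have mC : MeasurableSet {ω | C ω = c} := hC (measurableSet_singleton _)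
  have mEX : MeasurableSet EX := by
    rw [hEX]
    exact Finset.measurableSet_biInter _ fun t _ => hX t (measurableSet_singleton _)
  set B := {ω | X T ω = x T} ∩ {ω | Y T ω = y T} ∩ {ω | C ω = c} with hB
  have mYT : MeasurableSet {ω | Y T ω = y T} := hY T (measurableSet_singleton _)
  have mB : MeasurableSet B := (mXT.inter mYT).inter mC
  set A := (⋂ t ∈ Finset.range (T + 1), {ω | X t ω = x t})
      ∩ (⋂ t ∈ Finset.range (T + 1), {ω | Y t ω = y t}) ∩ {ω | C ω = c} with hA
  have hIX : (⋂ t ∈ Finset.range (T + 1), {ω | X t ω = x t})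
      = EX ∩ {ω | X T ω = x T} := by
    rw [hEX, Finset.range_add_one, Finset.set_biInter_insert, Set.inter_comm]
  have hAsubXB : A ⊆ EX ∩ B := by
    intro ω hω
    rcases hω with ⟨⟨h1, h2⟩, h3⟩
    rw [hIX] at h1
    have hYTω : Y T ω = y T :=
      Set.mem_iInter₂.mp h2 T (Finset.mem_range.mpr (Nat.lt_succ_self T))
    exact ⟨h1.1, ⟨h1.2, hYTω⟩, h3⟩
  have hXBpos : μ (EX ∩ B) ≠ 0 := by
    intro h
    exact absurd (measure_mono_null hAsubXB h) (ne_of_gt hpos)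
  have hBpos : μ B ≠ 0 := by
    intro h
    exact hXBpos (measure_mono_null Set.inter_subset_right h)
  have hXBfin : μ (EX ∩ B) ≠ ⊤ := measure_ne_top μ _
  -- chain rule
  have chain : μ[EX ∩ EY | B] = μ[EX | B] * μ[EY | EX ∩ B] := by
    rw [cond_apply mB, cond_apply mB, cond_apply (mEX.inter mB)]
    have h1 : B ∩ (EX ∩ EY) = EX ∩ B ∩ EY := by
      ext ω; simp only [Set.mem_inter_iff]; tauto
    have h2 : B ∩ EX = EX ∩ B := Set.inter_comm _ _
    rw [h1, h2, mul_assoc, ← mul_assoc (μ (EX ∩ B)),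
      ENNReal.mul_inv_cancel hXBpos hXBfin, one_mul]
  -- identify EX ∩ B with the conditioning set of (ii)
  have hset : EX ∩ B = (⋂ t ∈ Finset.range (T + 1), {ω | X t ω = x t})
      ∩ {ω | Y T ω = y T} ∩ {ω | C ω = c} := by
    rw [hIX]; ext ω; simp only [hB, Set.mem_inter_iff]; tauto
  have hset2 : ({ω | X 0 ω = x 0} ∩ {ω | Y T ω = y T} ∩ {ω | C ω = c} : Set Ω)
      = {ω | Y T ω = y T} ∩ {ω | X 0 ω = x 0} ∩ {ω | C ω = c} := by
    ext ω; simp only [Set.mem_inter_iff]; tauto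
  rw [chain, hi, hiii, hset, hii, hset2, hiv]
end

section
/- Let x₀ ∈ ℝ, let ā_prev ∈ (0, 1), let α ∈ (0, 1), and let X and ε be independent real random variables with X distributed as the Gaussian measure with mean √ā_prev · x₀ and variance 1 − ā_prev, and ε distributed as the standard Gaussian measure (mean 0, variance 1). Then the random variable √α · X + √(1 − α) · ε is distributed as the Gaussian measure with mean √(α · ā_prev) · x₀ and variance 1 − α · ā_prev. Equivalently, the pushforward of the product measure (gaussianReal (√ā_prev · x₀) (1 − ā_prev)) ⊗ (gaussianReal 0 1) under the map (x, e) ↦ √α · x + √(1 − α) · e equals gaussianReal (√(α · ā_prev) · x₀) (1 − α · ā_prev). -/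
open MeasureTheory ProbabilityTheory
open scoped NNReal

lemma Measure.map_prod_add_eq_conv_map {M α β : Type*} [AddMonoid M] [MeasurableSpace M]
    [MeasurableAdd₂ M] [MeasurableSpace α] [MeasurableSpace β] {μ : Measure α} {ν : Measure β}
    [SFinite μ] [SFinite ν] {f : α → M} {g : β → M} (hf : Measurable f) (hg : Measurable g) :
    (μ.prod ν).map (fun p => f p.1 + g p.2) = μ.map f ∗ ν.map g := by
  rw [Measure.conv, Measure.map_prod_map _ _ hf hg, Measure.map_map (by fun_prop) (by fun_prop)]
  rfl

lemma gaussianReal_prod_map_mul_add_mul (a b m₁ m₂ : ℝ) (v₁ v₂ : ℝ≥0) :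
    ((gaussianReal m₁ v₁).prod (gaussianReal m₂ v₂)).map (fun p => a * p.1 + b * p.2)
      = gaussianReal (a * m₁ + b * m₂)
          (.mk (a ^ 2) (sq_nonneg _) * v₁ + .mk (b ^ 2) (sq_nonneg _) * v₂) := by
  rw [Measure.map_prod_add_eq_conv_map (measurable_const_mul a) (measurable_const_mul b),
    gaussianReal_map_const_mul, gaussianReal_map_const_mul, gaussianReal_conv_gaussianReal]

/-- DDPM forward-marginal inductive step: if `X ~ N(√ā_prev · x₀, 1 - ā_prev)` and
`ε ~ N(0, 1)` are independent, then `√α · X + √(1 - α) · ε ~ N(√(α ā_prev) · x₀, 1 - α ā_prev)`,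
stated as a pushforward of the product measure. -/
theorem ddpm_forward_marginal_step
    (x₀ : ℝ) (abar α : ℝ)
    (habar : abar ∈ Set.Ioo (0 : ℝ) 1) (hα : α ∈ Set.Ioo (0 : ℝ) 1) :
    Measure.map (fun p : ℝ × ℝ => Real.sqrt α * p.1 + Real.sqrt (1 - α) * p.2)
        ((gaussianReal (Real.sqrt abar * x₀) (1 - abar).toNNReal).prod
          (gaussianReal 0 1))
      = gaussianReal (Real.sqrt (α * abar) * x₀) (1 - α * abar).toNNReal := by
  obtain ⟨-, habar_lt⟩ := habar
  obtain ⟨hα_pos, hα_lt⟩ := hα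
  rw [gaussianReal_prod_map_mul_add_mul]
  congr 1
  · rw [mul_zero, add_zero, ← mul_assoc, Real.sqrt_mul hα_pos.le]
  · apply NNReal.coe_injective
    push_cast
    rw [Real.coe_toNNReal _ (by linarith), Real.coe_toNNReal _ (by nlinarith),
      Real.sq_sqrt hα_pos.le, Real.sq_sqrt (by linarith)]
    ring
end

section
/- Let β ∈ (0, 1) and ā_prev ∈ (0, 1), and set α = 1 − β and ā = α · ā_prev. Then for all x₀, w, v ∈ ℝ, the following density identity holds: gaussianPDFReal (√α · w) β v · gaussianPDFReal (√ā_prev · x₀) (1 − ā_prev) w = gaussianPDFReal (√ā · x₀) (1 − ā) v · gaussianPDFReal (μ̃) β̃ w, where μ̃ = (√ā_prev · β / (1 − ā)) · x₀ + (√α · (1 − ā_prev) / (1 − ā)) · v and β̃ = ((1 − ā_prev) / (1 − ā)) · β. That is, the product of the forward transition density q(x_t = v | x_{t−1} = w) and the marginal density q(x_{t−1} = w | x_0 = x₀) equals the marginal density q(x_t = v | x_0 = x₀) times a Gaussian density in w with mean μ̃ and variance β̃. -/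
open ProbabilityTheory Real

/-- The DDPM reverse-posterior identity in Bayes-rule product form:
`q(x_t = v | x_{t-1} = w) · q(x_{t-1} = w | x₀) = q(x_t = v | x₀) · q(x_{t-1} = w | x_t, x₀)`,
where the reverse posterior is Gaussian with mean `μ̃` and variance `β̃`. -/
theorem ddpm_reverse_posterior_identity
    (β abarPrev : ℝ)
    (hβ : β ∈ Set.Ioo (0 : ℝ) 1) (habar : abarPrev ∈ Set.Ioo (0 : ℝ) 1)
    (α abar : ℝ) (hα : α = 1 - β) (habar' : abar = α * abarPrev)
    (x₀ w v : ℝ) :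
    gaussianPDFReal (Real.sqrt α * w) β.toNNReal v *
        gaussianPDFReal (Real.sqrt abarPrev * x₀) (1 - abarPrev).toNNReal w
      = gaussianPDFReal (Real.sqrt abar * x₀) (1 - abar).toNNReal v *
          gaussianPDFReal
            (Real.sqrt abarPrev * β / (1 - abar) * x₀
              + Real.sqrt α * (1 - abarPrev) / (1 - abar) * v)
            ((1 - abarPrev) / (1 - abar) * β).toNNReal w := by
  obtain ⟨hβ0, hβ1⟩ := hβ
  obtain ⟨hp0, hp1⟩ := habar
  have hα0 : 0 < α := by rw [hα]; linarith
  have habar0 : 0 < abar := by rw [habar']; positivity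
  have habar1 : abar < 1 := by
    rw [habar']; nlinarith
  have hs : (0:ℝ) < 1 - abarPrev := by linarith
  have ht : (0:ℝ) < 1 - abar := by linarith
  set a := Real.sqrt α with ha
  set b := Real.sqrt abarPrev with hb
  have ha2 : a ^ 2 = α := Real.sq_sqrt hα0.le
  have hb2 : b ^ 2 = abarPrev := Real.sq_sqrt hp0.le
  have hab : Real.sqrt abar = a * b := by
    rw [habar', Real.sqrt_mul hα0.le]
  have hc1 : (β.toNNReal : ℝ) = β := Real.coe_toNNReal _ hβ0.le
  have hc2 : ((1 - abarPrev).toNNReal : ℝ) = 1 - abarPrev :=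
    Real.coe_toNNReal _ hs.le
  have hc3 : ((1 - abar).toNNReal : ℝ) = 1 - abar := Real.coe_toNNReal _ ht.le
  have hc4 : (((1 - abarPrev) / (1 - abar) * β).toNNReal : ℝ)
      = (1 - abarPrev) / (1 - abar) * β :=
    Real.coe_toNNReal _ (by positivity)
  simp only [gaussianPDFReal, hc1, hc2, hc3, hc4, hab]
  rw [mul_mul_mul_comm, mul_mul_mul_comm ((√(2 * π * (1 - abar)))⁻¹), ← Real.exp_add,
    ← Real.exp_add, ← mul_inv, ← mul_inv, ← Real.sqrt_mul (by positivity),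
    ← Real.sqrt_mul (by positivity)]
  congr 2
  · rw [mul_comm]; congr 1; field_simp
  · have hβa : β = 1 - a ^ 2 := by rw [ha2, hα]; ring
    have habar2 : abar = a ^ 2 * b ^ 2 := by rw [habar', ha2, hb2]
    have hpb : abarPrev = b ^ 2 := hb2.symm
    have h1 : (1 : ℝ) - a ^ 2 ≠ 0 := by rw [← hβa]; exact hβ0.ne'
    have h2 : (1 : ℝ) - b ^ 2 ≠ 0 := by rw [hb2]; exact hs.ne'
    have h3 : (1 : ℝ) - a ^ 2 * b ^ 2 ≠ 0 := by rw [← habar2]; exact ht.ne'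
    rw [habar2, hpb, hβa]
    field_simp [h1, h2, h3]
    ring
end
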